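/- arXiv:1312.1237 — 2 statements merged into one kernel-verified Lean document; each statement's English description precedes it below -/
import Mathlib

section
/- For an odd prime p and a, b ∈ ℚ_p^*, writing a = p^α a' and b = p^β b' with a', b' p-adic units, the Hilbert symbol satisfies (a,b)_p = (-1)^{((p-1)/2)·αβ} · (a'/p)^β · (b'/p)^α, where (·/p) denotes the Legendre symbol applied to the residue of the unit. -/
open Classical in
/-- The Hilbert symbol over `ℚ_[p]`: `1` if `z² = a x² + b y²` has a nontrivial
solution, `-1` otherwise. (Valued in `ℚ`.) -/
noncomputable def padicHilbertSym (p : ℕ) [Fact p.Prime] (a b : ℚ_[p]) : ℚ :=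
  if ∃ x y z : ℚ_[p], ¬(x = 0 ∧ y = 0 ∧ z = 0) ∧ z ^ 2 = a * x ^ 2 + b * y ^ 2 then 1 else -1

/-!
The symbol only sees `a` and `b` up to squares, so only the parities of `α` and `β` matter.
For units `u, v` the conic `z² = u x² + v y²` has a point modulo `p` by counting, and Hensel's
lemma lifts it, so `(u, v) = 1`. For `(p u, v)`, a primitive solution reduced modulo `p` gives
`z² ≡ v y²`; if `v` is not a square mod `p` this forces `p ∣ y, z`, hence `p ∣ x`, so the symbol
is `(v/p)`. Finally `(p u, p v) = (p u, -p²uv) = (p u, -uv) = (-uv/p)`, and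
`(-1/p) = (-1)^((p-1)/2)`.
-/

open PadicInt Polynomial

theorem zpow_eq_ite_even {G₀ : Type*} [GroupWithZero G₀] {x : G₀} (hx : x ^ 2 = 1) (n : ℤ) :
    x ^ n = if Even n then 1 else x := by
  have hx0 : x ≠ 0 := by rintro rfl; simp at hx
  obtain ⟨k, rfl | rfl⟩ := Int.even_or_odd' n
  · simp [zpow_mul, hx]
  · simp [zpow_add₀ hx0, zpow_mul, hx, parity_simps]

theorem zpow_eq_sq_mul_zpow_emod_two {G₀ : Type*} [GroupWithZero G₀] {c : G₀} (hc : c ≠ 0)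
    (n : ℤ) : c ^ n = (c ^ (n / 2)) ^ 2 * c ^ (n % 2) := by
  rw [← zpow_natCast, ← zpow_mul, ← zpow_add₀ hc]
  congr 1
  push_cast
  omega

theorem legendreSym_val (p : ℕ) [Fact p.Prime] (r : ZMod p) :
    legendreSym p (r.val : ℤ) = quadraticChar (ZMod p) r := by
  simp [legendreSym]

theorem quadraticChar_neg_one_eq_neg_one_pow {p : ℕ} [Fact p.Prime] (hp : p ≠ 2) :
    quadraticChar (ZMod p) (-1) = (-1) ^ ((p - 1) / 2) := by
  have hodd : p % 2 = 1 := Nat.odd_iff.1 ((Fact.out : p.Prime).odd_of_ne_two hp)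
  rw [quadraticChar_neg_one (by rwa [ZMod.ringChar_zmod_n]), ZMod.card,
    ZMod.χ₄_eq_neg_one_pow hodd]
  congr 1
  omega

theorem FiniteField.exists_mul_sq_add_mul_sq_eq_one {F : Type*} [Field F] [Fintype F]
    (hF : Fintype.card F % 2 = 1) {u v : F} (hu : u ≠ 0) (hv : v ≠ 0) :
    ∃ x y : F, u * x ^ 2 + v * y ^ 2 = 1 := by
  obtain ⟨x, y, h⟩ := exists_root_sum_quadratic (degree_quadratic (b := 0) (c := 0) hu)
    (degree_quadratic (b := 0) (c := -1) hv) hF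
  simp only [eval_add, eval_mul, eval_C, eval_pow, eval_X, zero_mul, add_zero] at h
  exact ⟨x, y, by linear_combination h⟩

namespace PadicInt

variable {p : ℕ} [Fact p.Prime]

theorem toZMod_eq_zero_iff_dvd (x : ℤ_[p]) : toZMod x = 0 ↔ (p : ℤ_[p]) ∣ x := by
  rw [← RingHom.mem_ker, ker_toZMod, maximalIdeal_eq_span_p, Ideal.mem_span_singleton]

theorem norm_eq_one_of_toZMod_ne_zero {x : ℤ_[p]} (hx : toZMod x ≠ 0) : ‖x‖ = 1 :=
  x.norm_le_one.antisymm <| not_lt.1 fun h ↦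
    hx <| (toZMod_eq_zero_iff_dvd x).2 <| (norm_lt_one_iff_dvd x).1 h

theorem toZMod_units_ne_zero (u : ℤ_[p]ˣ) : toZMod (u : ℤ_[p]) ≠ 0 :=
  (toZMod.isUnit_map u.isUnit).ne_zero

theorem isSquare_of_isSquare_toZMod (hp : p ≠ 2) {c : ℤ_[p]} (hc : toZMod c ≠ 0)
    (h : IsSquare (toZMod c)) : IsSquare c := by
  obtain ⟨s, hs⟩ := h
  obtain ⟨a, rfl⟩ := ZMod.ringHom_surjective toZMod s
  have h2 : (2 : ZMod p) ≠ 0 := Ring.two_ne_zero (by rwa [ZMod.ringChar_zmod_n])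
  have ha : toZMod a ≠ 0 := fun ha ↦ hc (by rw [hs, ha, mul_zero])
  have hderiv : ‖(X ^ 2 - C c).derivative.aeval a‖ = 1 := by
    refine norm_eq_one_of_toZMod_ne_zero ?_
    simpa [← two_mul, map_ofNat] using mul_ne_zero h2 ha
  have hval : ‖(X ^ 2 - C c).aeval a‖ < ‖(X ^ 2 - C c).derivative.aeval a‖ ^ 2 := by
    rw [hderiv, one_pow, norm_lt_one_iff_dvd, ← toZMod_eq_zero_iff_dvd]
    simp [hs, sq]
  obtain ⟨t, ht, -⟩ := hensels_lemma hval
  exact ⟨t, by simpa [sub_eq_zero, sq, eq_comm] using ht⟩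

end PadicInt

section

variable {p : ℕ} [Fact p.Prime]

def HilbertIsotropic (a b : ℚ_[p]) : Prop :=
  ∃ x y z : ℚ_[p], ¬(x = 0 ∧ y = 0 ∧ z = 0) ∧ z ^ 2 = a * x ^ 2 + b * y ^ 2

theorem padicHilbertSym_of_isotropic {a b : ℚ_[p]} (h : HilbertIsotropic a b) :
    padicHilbertSym p a b = 1 :=
  if_pos h

theorem padicHilbertSym_of_not_isotropic {a b : ℚ_[p]} (h : ¬HilbertIsotropic a b) :
    padicHilbertSym p a b = -1 :=
  if_neg h

open Classical in
theorem padicHilbertSym_congr {a b c d : ℚ_[p]}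
    (h : HilbertIsotropic a b ↔ HilbertIsotropic c d) :
    padicHilbertSym p a b = padicHilbertSym p c d :=
  if_congr h rfl rfl

theorem HilbertIsotropic.symm {a b : ℚ_[p]} (h : HilbertIsotropic a b) : HilbertIsotropic b a := by
  obtain ⟨x, y, z, hne, heq⟩ := h
  exact ⟨y, x, z, by tauto, by rw [heq]; ring⟩

theorem hilbertIsotropic_comm {a b : ℚ_[p]} : HilbertIsotropic a b ↔ HilbertIsotropic b a :=
  ⟨.symm, .symm⟩

theorem HilbertIsotropic.mul_sq_left {a b : ℚ_[p]} {c : ℚ_[p]} (hc : c ≠ 0)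
    (h : HilbertIsotropic a b) : HilbertIsotropic (c ^ 2 * a) b := by
  obtain ⟨x, y, z, hne, heq⟩ := h
  refine ⟨x / c, y, z, by simpa [hc] using hne, ?_⟩
  rw [heq]
  field_simp

theorem hilbertIsotropic_mul_sq_left {a b c : ℚ_[p]} (hc : c ≠ 0) :
    HilbertIsotropic (c ^ 2 * a) b ↔ HilbertIsotropic a b := by
  refine ⟨fun h ↦ ?_, .mul_sq_left hc⟩
  simpa [← mul_assoc, ← mul_pow, hc] using h.mul_sq_left (inv_ne_zero hc)

theorem hilbertIsotropic_mul_sq_right {a b c : ℚ_[p]} (hc : c ≠ 0) :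
    HilbertIsotropic a (c ^ 2 * b) ↔ HilbertIsotropic a b := by
  rw [hilbertIsotropic_comm, hilbertIsotropic_mul_sq_left hc, hilbertIsotropic_comm]

theorem HilbertIsotropic.neg_mul_right {a b : ℚ_[p]} (ha : a ≠ 0) (h : HilbertIsotropic a b) :
    HilbertIsotropic a (-(a * b)) := by
  obtain ⟨x, y, z, hne, heq⟩ := h
  refine ⟨z, y, a * x, by simpa [ha, and_comm, and_left_comm] using hne, ?_⟩
  linear_combination (-a) * heq

theorem hilbertIsotropic_neg_mul_right {a b : ℚ_[p]} (ha : a ≠ 0) :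
    HilbertIsotropic a (-(a * b)) ↔ HilbertIsotropic a b := by
  refine ⟨fun h ↦ ?_, .neg_mul_right ha⟩
  have := h.neg_mul_right ha
  rwa [show -(a * -(a * b)) = a ^ 2 * b by ring, hilbertIsotropic_mul_sq_right ha] at this

theorem HilbertIsotropic.exists_primitive {a b : ℤ_[p]} (h : HilbertIsotropic (a : ℚ_[p]) b) :
    ∃ x y z : ℤ_[p], ¬((p : ℤ_[p]) ∣ x ∧ (p : ℤ_[p]) ∣ y ∧ (p : ℤ_[p]) ∣ z) ∧
      z ^ 2 = a * x ^ 2 + b * y ^ 2 := by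
  classical
  obtain ⟨x, y, z, hne, heq⟩ := h
  obtain ⟨c, hc, hmax⟩ := ({x, y, z} : Finset ℚ_[p]).exists_max_image norm ⟨x, by simp⟩
  simp only [Finset.mem_insert, Finset.mem_singleton, forall_eq_or_imp, forall_eq] at hc hmax
  have hc0 : c ≠ 0 := by
    rintro rfl
    simp only [norm_zero, norm_le_zero_iff] at hmax
    exact hne hmax
  have hlift {t : ℚ_[p]} (ht : ‖t‖ ≤ ‖c‖) : ∃ t' : ℤ_[p], (t' : ℚ_[p]) = t / c :=
    ⟨⟨t / c, by rwa [norm_div, div_le_one (norm_pos_iff.2 hc0)]⟩, rfl⟩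
  obtain ⟨x', hx⟩ := hlift hmax.1
  obtain ⟨y', hy⟩ := hlift hmax.2.1
  obtain ⟨z', hz⟩ := hlift hmax.2.2
  refine ⟨x', y', z', ?_, PadicInt.ext ?_⟩
  · rw [← norm_lt_one_iff_dvd, ← norm_lt_one_iff_dvd, ← norm_lt_one_iff_dvd, norm_def, norm_def,
      norm_def, hx, hy, hz]
    rintro ⟨hx, hy, hz⟩
    have : ‖c / c‖ < 1 := by rcases hc with rfl | rfl | rfl <;> assumption
    simp [hc0] at this
  · push_cast [hx, hy, hz]
    field_simp
    linear_combination heq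

theorem hilbertIsotropic_units (hp : p ≠ 2) (u v : ℤ_[p]ˣ) :
    HilbertIsotropic ((u : ℤ_[p]) : ℚ_[p]) ((v : ℤ_[p]) : ℚ_[p]) := by
  have hcard : Fintype.card (ZMod p) % 2 = 1 := by
    rw [ZMod.card, ← Nat.odd_iff]
    exact (Fact.out : p.Prime).odd_of_ne_two hp
  obtain ⟨x₀, y₀, h₀⟩ := FiniteField.exists_mul_sq_add_mul_sq_eq_one hcard
    (toZMod_units_ne_zero u) (toZMod_units_ne_zero v)
  obtain ⟨x, rfl⟩ := ZMod.ringHom_surjective toZMod x₀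
  obtain ⟨y, rfl⟩ := ZMod.ringHom_surjective toZMod y₀
  have hres : toZMod ((u : ℤ_[p]) * x ^ 2 + (v : ℤ_[p]) * y ^ 2) = 1 := by simpa using h₀
  obtain ⟨t, ht⟩ := isSquare_of_isSquare_toZMod hp (by rw [hres]; exact one_ne_zero)
    (by rw [hres]; exact ⟨1, (one_mul 1).symm⟩)
  refine ⟨x, y, t, ?_, ?_⟩
  · rintro ⟨hx, hy, -⟩
    simp_all
  · simpa [sq] using congrArg ((↑) : ℤ_[p] → ℚ_[p]) ht.symm

theorem hilbertIsotropic_p_mul_iff (hp : p ≠ 2) (u v : ℤ_[p]ˣ) :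
    HilbertIsotropic ((p : ℚ_[p]) * ((u : ℤ_[p]) : ℚ_[p])) ((v : ℤ_[p]) : ℚ_[p]) ↔
      IsSquare (toZMod (v : ℤ_[p])) := by
  refine ⟨fun h ↦ ?_, fun hv ↦ ?_⟩
  · by_contra hv
    obtain ⟨x, y, z, hprim, heq⟩ := HilbertIsotropic.exists_primitive
      (a := (p : ℤ_[p]) * (u : ℤ_[p])) (b := v) (by push_cast; exact h)
    have hres := congrArg toZMod heq
    simp only [map_add, map_mul, map_pow, map_natCast, ZMod.natCast_self, zero_mul,
      zero_add] at hres
    have hy : toZMod y = 0 := by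
      by_contra hy
      exact hv ⟨toZMod z / toZMod y, by field_simp; linear_combination -hres⟩
    have hz : toZMod z = 0 := by simpa [hy] using hres
    obtain ⟨y', rfl⟩ := (toZMod_eq_zero_iff_dvd y).1 hy
    obtain ⟨z', rfl⟩ := (toZMod_eq_zero_iff_dvd z).1 hz
    have hp0 : (p : ℤ_[p]) ≠ 0 := Nat.cast_ne_zero.2 (Fact.out : p.Prime).ne_zero
    have hx' : (p : ℤ_[p]) * (z' ^ 2 - v * y' ^ 2) = u * x ^ 2 :=
      mul_left_cancel₀ hp0 (by linear_combination heq)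
    have hx : toZMod x = 0 := by
      have := congrArg toZMod hx'
      simpa [toZMod_units_ne_zero u] using this.symm
    exact hprim ⟨(toZMod_eq_zero_iff_dvd x).1 hx, dvd_mul_right _ _, dvd_mul_right _ _⟩
  · obtain ⟨t, ht⟩ := isSquare_of_isSquare_toZMod hp (toZMod_units_ne_zero v) hv
    refine ⟨0, 1, t, by simp, ?_⟩
    simpa [sq] using congrArg ((↑) : ℤ_[p] → ℚ_[p]) ht.symm

theorem padicHilbertSym_eq_quadraticChar {a b : ℚ_[p]} {r : ZMod p} (hr : r ≠ 0)
    (h : HilbertIsotropic a b ↔ IsSquare r) :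
    padicHilbertSym p a b = quadraticChar (ZMod p) r := by
  by_cases hsq : IsSquare r
  · rw [padicHilbertSym_of_isotropic (h.2 hsq), (quadraticChar_one_iff_isSquare hr).2 hsq]
    simp
  · rw [padicHilbertSym_of_not_isotropic (mt h.1 hsq),
      quadraticChar_neg_one_iff_not_isSquare.2 hsq]
    simp

theorem padicHilbertSym_zpow_mul_zpow_mul (a b : ℚ_[p]) (α β : ℤ) :
    padicHilbertSym p ((p : ℚ_[p]) ^ α * a) ((p : ℚ_[p]) ^ β * b) =
      padicHilbertSym p ((p : ℚ_[p]) ^ (α % 2) * a) ((p : ℚ_[p]) ^ (β % 2) * b) := by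
  have hp0 : (p : ℚ_[p]) ≠ 0 := Nat.cast_ne_zero.2 (Fact.out : p.Prime).ne_zero
  refine padicHilbertSym_congr ?_
  rw [zpow_eq_sq_mul_zpow_emod_two hp0 α, zpow_eq_sq_mul_zpow_emod_two hp0 β, mul_assoc,
    mul_assoc, hilbertIsotropic_mul_sq_left (zpow_ne_zero _ hp0),
    hilbertIsotropic_mul_sq_right (zpow_ne_zero _ hp0)]

theorem padicHilbertSym_units (hp : p ≠ 2) (u v : ℤ_[p]ˣ) :
    padicHilbertSym p ((u : ℤ_[p]) : ℚ_[p]) ((v : ℤ_[p]) : ℚ_[p]) = 1 :=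
  padicHilbertSym_of_isotropic (hilbertIsotropic_units hp u v)

theorem padicHilbertSym_p_mul_left (hp : p ≠ 2) (u v : ℤ_[p]ˣ) :
    padicHilbertSym p ((p : ℚ_[p]) * ((u : ℤ_[p]) : ℚ_[p])) ((v : ℤ_[p]) : ℚ_[p]) =
      quadraticChar (ZMod p) (toZMod (v : ℤ_[p])) :=
  padicHilbertSym_eq_quadraticChar (toZMod_units_ne_zero v) (hilbertIsotropic_p_mul_iff hp u v)

theorem padicHilbertSym_p_mul_right (hp : p ≠ 2) (u v : ℤ_[p]ˣ) :
    padicHilbertSym p ((u : ℤ_[p]) : ℚ_[p]) ((p : ℚ_[p]) * ((v : ℤ_[p]) : ℚ_[p])) =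
      quadraticChar (ZMod p) (toZMod (u : ℤ_[p])) := by
  rw [padicHilbertSym_congr hilbertIsotropic_comm, padicHilbertSym_p_mul_left hp]

theorem padicHilbertSym_p_mul_p_mul (hp : p ≠ 2) (u v : ℤ_[p]ˣ) :
    padicHilbertSym p ((p : ℚ_[p]) * ((u : ℤ_[p]) : ℚ_[p]))
        ((p : ℚ_[p]) * ((v : ℤ_[p]) : ℚ_[p])) =
      quadraticChar (ZMod p) (-1) * quadraticChar (ZMod p) (toZMod (u : ℤ_[p])) *
        quadraticChar (ZMod p) (toZMod (v : ℤ_[p])) := by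
  have hp0 : (p : ℚ_[p]) ≠ 0 := Nat.cast_ne_zero.2 (Fact.out : p.Prime).ne_zero
  have hpu : (p : ℚ_[p]) * ((u : ℤ_[p]) : ℚ_[p]) ≠ 0 := by simp [hp0]
  rw [padicHilbertSym_congr (hilbertIsotropic_neg_mul_right hpu).symm,
    show -((p : ℚ_[p]) * ((u : ℤ_[p]) : ℚ_[p]) * ((p : ℚ_[p]) * ((v : ℤ_[p]) : ℚ_[p]))) =
      (p : ℚ_[p]) ^ 2 * (((-(u * v) : ℤ_[p]ˣ) : ℤ_[p]) : ℚ_[p]) by push_cast; ring,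
    padicHilbertSym_congr (hilbertIsotropic_mul_sq_right hp0), padicHilbertSym_p_mul_left hp,
    Units.val_neg, Units.val_mul, map_neg, map_mul, neg_eq_neg_one_mul, map_mul, map_mul]
  push_cast
  ring

end

theorem hilbert_symbol_formula_general (p : ℕ) [Fact p.Prime] (hp2 : p ≠ 2)
    (α β : ℤ) (a' b' : ℤ_[p]ˣ) (a b : ℚ_[p])
    (ha : a = (p : ℚ_[p]) ^ α * ((a' : ℤ_[p]) : ℚ_[p]))
    (hb : b = (p : ℚ_[p]) ^ β * ((b' : ℤ_[p]) : ℚ_[p])) :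
    padicHilbertSym p a b =
      (-1 : ℚ) ^ ((((p - 1) / 2 : ℕ) : ℤ) * α * β) *
        ((legendreSym p ((PadicInt.toZMod (a' : ℤ_[p])).val : ℤ) : ℚ)) ^ β *
        ((legendreSym p ((PadicInt.toZMod (b' : ℤ_[p])).val : ℤ) : ℚ)) ^ α := by
  have hχ (u : ℤ_[p]ˣ) : ((quadraticChar (ZMod p) (toZMod (u : ℤ_[p])) : ℤ) : ℚ) ^ 2 = 1 := by
    exact_mod_cast quadraticChar_sq_one (toZMod_units_ne_zero u)
  have hε : ((-1 : ℚ) ^ ((p - 1) / 2)) ^ 2 = 1 := by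
    rw [← pow_mul, mul_comm, pow_mul, neg_one_sq, one_pow]
  rw [ha, hb, padicHilbertSym_zpow_mul_zpow_mul, legendreSym_val, legendreSym_val,
    mul_assoc _ α, zpow_mul, zpow_natCast, zpow_eq_ite_even hε, zpow_eq_ite_even (hχ a'),
    zpow_eq_ite_even (hχ b')]
  simp only [Int.even_mul]
  rcases Int.emod_two_eq α with hα | hα <;> rcases Int.emod_two_eq β with hβ | hβ <;>
    simp [Int.even_iff, hα, hβ, padicHilbertSym_units hp2, padicHilbertSym_p_mul_left hp2,
      padicHilbertSym_p_mul_right hp2, padicHilbertSym_p_mul_p_mul hp2,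
      quadraticChar_neg_one_eq_neg_one_pow hp2]

theorem hilbert_symbol_formula (p : ℕ) [Fact p.Prime] (hp2 : p ≠ 2)
    (α β : ℤ) (a' b' : ℤ_[p]ˣ) (a b : ℚ_[p]) (ha0 : a ≠ 0) (hb0 : b ≠ 0)
    (ha : a = (p : ℚ_[p]) ^ α * ((a' : ℤ_[p]) : ℚ_[p]))
    (hb : b = (p : ℚ_[p]) ^ β * ((b' : ℤ_[p]) : ℚ_[p])) :
    padicHilbertSym p a b =
      (-1 : ℚ) ^ ((((p - 1) / 2 : ℕ) : ℤ) * α * β) *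
        ((legendreSym p ((PadicInt.toZMod (a' : ℤ_[p])).val : ℤ) : ℚ)) ^ β *
        ((legendreSym p ((PadicInt.toZMod (b' : ℤ_[p])).val : ℤ) : ℚ)) ^ α :=
  hilbert_symbol_formula_general p hp2 α β a' b' a b ha hb
end

section
/- Let X ⊕ O₁ be the quadratic form on F₂³ given by Q(x₁,x₂,x₃) = x₁x₂. Then 𝒩(X ⊕ O₁) = {0, 1, 2}: there exist bilinear forms on F₂³ with diagonal values realizing Q and with nullity 0, 1, and 2, and no other nullities occur. -/
/-!
A bilinear form on `𝔽₂³` has diagonal `x ↦ x₀x₁` iff it differs from `x₀y₁` by an alternating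
form. Such a form is nonzero, so its nullity is at most `2`. The form `x₀y₁` has rank `1`; adding
the alternating forms `x₀y₂ + x₂y₀` and `x₀y₂ + x₂y₀ + x₁y₂ + x₂y₁` gives ranks `2` and `3`.
-/

/-- The set of nullities of bilinear forms whose diagonal realizes `Q`. -/
def nullitySet {W : Type*} [AddCommGroup W] [Module (ZMod 2) W] (Q : W → ZMod 2) : Set ℕ :=
  {n | ∃ B : W →ₗ[ZMod 2] W →ₗ[ZMod 2] ZMod 2, (∀ x, B x x = Q x) ∧
    Module.finrank (ZMod 2) W - Module.finrank (ZMod 2) (LinearMap.range B) = n}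

open Module Matrix LinearMap

lemma finrank_sub_finrank_range_eq_finrank_ker {K V V' : Type*} [DivisionRing K]
    [AddCommGroup V] [Module K V] [FiniteDimensional K V] [AddCommGroup V'] [Module K V']
    (f : V →ₗ[K] V') : finrank K V - finrank K (range f) = finrank K (ker f) := by
  have := f.finrank_range_add_finrank_ker
  omega

lemma Matrix.mem_ker_toLinearMap₂'_iff {R n m : Type*} [CommRing R] [Fintype n] [Fintype m]
    [DecidableEq n] [DecidableEq m] (M : Matrix n m R) (x : n → R) :
    x ∈ ker (toLinearMap₂' R M (S₁ := R) (S₂ := R)) ↔ x ᵥ* M = 0 := by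
  rw [mem_ker, ← dotProduct_eq_zero_iff, LinearMap.ext_iff]
  simp [toLinearMap₂'_apply', dotProduct_mulVec]

lemma Matrix.finrank_range_toLinearMap₂'_of_det_ne_zero {K n : Type*} [Field K] [Fintype n]
    [DecidableEq n] {M : Matrix n n K} (hM : M.det ≠ 0) :
    finrank K (range (toLinearMap₂' K M (S₁ := K) (S₂ := K))) = Fintype.card n := by
  have hker : ker (toLinearMap₂' K M (S₁ := K) (S₂ := K)) = ⊥ := by
    rw [← separatingLeft_iff_ker_eq_bot, separatingLeft_toLinearMap₂'_iff]
    exact Matrix.separatingLeft_iff_det_ne_zero.mpr hM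
  rw [finrank_range_of_inj (ker_eq_bot.mp hker), finrank_fintype_fun_eq_card]

lemma lt_finrank_of_mem_nullitySet {W : Type*} [AddCommGroup W] [Module (ZMod 2) W]
    [FiniteDimensional (ZMod 2) W] {Q : W → ZMod 2} (hQ : Q ≠ 0) {n : ℕ}
    (hn : n ∈ nullitySet Q) : n < finrank (ZMod 2) W := by
  obtain ⟨B, hBQ, rfl⟩ := hn
  obtain ⟨x, hx⟩ := Function.ne_iff.mp hQ
  have hW : 0 < finrank (ZMod 2) W :=
    finrank_pos_iff_exists_ne_zero.mpr ⟨x, fun h ↦ hx (by simp [← hBQ, h])⟩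
  have hB : B ≠ 0 := fun h ↦ hx (by simp [← hBQ, h])
  have hr : 0 < finrank (ZMod 2) (range B) :=
    Nat.pos_of_ne_zero (by rwa [Ne, Submodule.finrank_eq_zero, range_eq_bot])
  omega

lemma finrank_sub_one_mem_nullitySet_mul {W : Type*} [AddCommGroup W] [Module (ZMod 2) W]
    {f g : W →ₗ[ZMod 2] ZMod 2} (hf : f ≠ 0) (hg : g ≠ 0) :
    finrank (ZMod 2) W - 1 ∈ nullitySet (fun v ↦ f v * g v) :=
  ⟨f.smulRight g, fun _ ↦ rfl, by rw [range_smulRight_apply hf, finrank_span_singleton hg]⟩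

namespace XOplusO1

noncomputable def nondegForm : (Fin 3 → ZMod 2) →ₗ[ZMod 2] (Fin 3 → ZMod 2) →ₗ[ZMod 2] ZMod 2 :=
  toLinearMap₂' (ZMod 2) !![0, 1, 1; 0, 0, 1; 1, 1, 0]

noncomputable def nullityOneForm :
    (Fin 3 → ZMod 2) →ₗ[ZMod 2] (Fin 3 → ZMod 2) →ₗ[ZMod 2] ZMod 2 :=
  toLinearMap₂' (ZMod 2) !![0, 1, 1; 0, 0, 0; 1, 0, 0]

lemma nondegForm_self (x : Fin 3 → ZMod 2) : nondegForm x x = x 0 * x 1 := by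
  simp [nondegForm, toLinearMap₂'_apply', dotProduct, mulVec, Fin.sum_univ_three]
  linear_combination (x 0 * x 2 + x 1 * x 2) * CharTwo.two_eq_zero (R := ZMod 2)

lemma nullityOneForm_self (x : Fin 3 → ZMod 2) : nullityOneForm x x = x 0 * x 1 := by
  simp [nullityOneForm, toLinearMap₂'_apply', dotProduct, mulVec, Fin.sum_univ_three]
  linear_combination x 0 * x 2 * CharTwo.two_eq_zero (R := ZMod 2)

lemma ker_nullityOneForm : ker nullityOneForm = Submodule.span (ZMod 2) {Pi.single 1 1} := by
  ext x
  rw [nullityOneForm, mem_ker_toLinearMap₂'_iff, Submodule.mem_span_singleton]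
  simp [funext_iff, Fin.forall_fin_succ, vecHead, vecTail]
  grind

lemma zero_mem_nullitySet : 0 ∈ nullitySet (fun v : Fin 3 → ZMod 2 => v 0 * v 1) := by
  have hdet : det !![(0 : ZMod 2), 1, 1; 0, 0, 1; 1, 1, 0] ≠ 0 := by
    simp [det_fin_three]
  refine ⟨nondegForm, nondegForm_self, ?_⟩
  rw [nondegForm, finrank_range_toLinearMap₂'_of_det_ne_zero hdet, finrank_fintype_fun_eq_card,
    Nat.sub_self]

lemma one_mem_nullitySet : 1 ∈ nullitySet (fun v : Fin 3 → ZMod 2 => v 0 * v 1) := by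
  refine ⟨nullityOneForm, nullityOneForm_self, ?_⟩
  rw [finrank_sub_finrank_range_eq_finrank_ker, ker_nullityOneForm,
    finrank_span_singleton (by simp)]

lemma two_mem_nullitySet : 2 ∈ nullitySet (fun v : Fin 3 → ZMod 2 => v 0 * v 1) := by
  have hproj (i : Fin 3) : (proj i : (Fin 3 → ZMod 2) →ₗ[ZMod 2] ZMod 2) ≠ 0 :=
    fun h ↦ by simpa using LinearMap.congr_fun h (Pi.single i 1)
  simpa using finrank_sub_one_mem_nullitySet_mul (hproj 0) (hproj 1)

end XOplusO1

theorem nullitySet_X_oplus_O1 :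
    nullitySet (fun v : Fin 3 → ZMod 2 => v 0 * v 1) = {0, 1, 2} := by
  refine Set.Subset.antisymm (fun n hn ↦ ?_) ?_
  · have hQ : (fun v : Fin 3 → ZMod 2 => v 0 * v 1) ≠ 0 :=
      Function.ne_iff.mpr ⟨1, by simp⟩
    have := lt_finrank_of_mem_nullitySet hQ hn
    rw [finrank_fin_fun] at this
    interval_cases n <;> simp
  · rintro n (rfl | rfl | rfl)
    exacts [XOplusO1.zero_mem_nullitySet, XOplusO1.one_mem_nullitySet,
      XOplusO1.two_mem_nullitySet]
end
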